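/- arXiv:1711.05156 — 4 statements merged into one kernel-verified Lean document; each statement's English description precedes it below -/
import Mathlib

section
/- Let 0 → L → E →^p Q → 0 be an extension of (k,A)-Lie-Rinehart algebras, with b the anchor of Q, and let Z(L) = {z ∈ L : [z,ℓ] = 0 for all ℓ ∈ L} be the centre of L. Then: (i) Z(L) is an A-submodule of L; (ii) for every x ∈ Q and z ∈ Z(L), the element [x', z]_E, where x' ∈ E is any element with p(x') = x, lies in Z(L) and is independent of the choice of the lift x'; (iii) the resulting map ρ : Q → End_k(Z(L)), ρ(x)(z) = [x',z]_E, is A-linear in x and satisfies ρ(x)(f·z) = f·ρ(x)(z) + b(x)(f)·z and ρ([x,y]) = ρ(x)∘ρ(y) − ρ(y)∘ρ(x) for all x,y ∈ Q, f ∈ A, z ∈ Z(L). Thus the extension induces a representation of Q on Z(L). -/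
/-!
The kernel `L` of `p` is an ideal of `E` on which the anchor vanishes. Hence Jacobi keeps `[x', z]`
central, and the Leibniz rule, read in the first argument as `[f • s, t] = f • [s, t] - a(t)(f) • s`,
makes `Z(L)` an `A`-submodule and `[x', z]` `A`-linear in `x'`. Two lifts of `x` differ by an
element of `L`, which brackets trivially with `Z(L)`; so `ρ` is well defined, and Jacobi in `E`
becomes `ρ([x, y]) = [ρ(x), ρ(y)]`.
-/

section LieRinehart

variable {k A E : Type*} [CommRing k] [CommRing A] [Algebra k A]
  [AddCommGroup E] [Module k E] [Module A E] {brE : E →ₗ[k] E →ₗ[k] E}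

theorem bracket_smul_left {aE : E →ₗ[A] Derivation k A A} (halt : brE.IsAlt)
    (hleib : ∀ (s t : E) (f : A), brE s (f • t) = f • brE s t + (aE s) f • t)
    (s t : E) (f : A) : brE (f • s) t = f • brE s t - (aE t) f • s := by
  rw [← halt.neg t, hleib, ← halt.neg t, smul_neg]
  abel

theorem bracket_bracket_left (halt : brE.IsAlt)
    (hjac : ∀ x y z : E, brE x (brE y z) + brE y (brE z x) + brE z (brE x y) = 0) (x y z : E) :
    brE (brE x y) z = brE x (brE y z) - brE y (brE x z) := by
  rw [← halt.neg z, ← halt.neg z x, map_neg, eq_neg_of_add_eq_zero_right (hjac x y z)]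
  abel

end LieRinehart

theorem anchor_eq_zero_of_mem_ker {k A E Q : Type*} [CommRing k] [CommRing A] [Algebra k A]
    [AddCommGroup E] [Module A E] [AddCommGroup Q] [Module A Q] {p : E →ₗ[A] Q}
    {aE : E →ₗ[A] Derivation k A A} {bQ : Q →ₗ[A] Derivation k A A}
    (hpa : ∀ e : E, bQ (p e) = aE e) {ℓ : E} (hℓ : ℓ ∈ LinearMap.ker p) : aE ℓ = 0 := by
  rw [← hpa, LinearMap.mem_ker.mp hℓ, map_zero]

section KernelCentre

variable {k A E Q : Type*} [CommRing k] [CommRing A]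
  [AddCommGroup E] [Module k E] [Module A E] [AddCommGroup Q] [Module A Q]
  {brE : E →ₗ[k] E →ₗ[k] E} {p : E →ₗ[A] Q}

variable (brE p) in
def kernelCentre : Set E :=
  {z | z ∈ LinearMap.ker p ∧ ∀ ℓ ∈ LinearMap.ker p, brE z ℓ = 0}

namespace kernelCentre

theorem zero_mem : (0 : E) ∈ kernelCentre brE p :=
  ⟨Submodule.zero_mem _, fun ℓ _ => by rw [map_zero, LinearMap.zero_apply]⟩

theorem add_mem {z w : E} (hz : z ∈ kernelCentre brE p) (hw : w ∈ kernelCentre brE p) :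
    z + w ∈ kernelCentre brE p :=
  ⟨Submodule.add_mem _ hz.1 hw.1, fun ℓ hℓ => by
    rw [map_add, LinearMap.add_apply, hz.2 ℓ hℓ, hw.2 ℓ hℓ, add_zero]⟩

theorem bracket_left_eq_zero (halt : brE.IsAlt) {z ℓ : E} (hz : z ∈ kernelCentre brE p)
    (hℓ : ℓ ∈ LinearMap.ker p) : brE ℓ z = 0 :=
  halt.eq_iff.mp (hz.2 ℓ hℓ)

theorem smul_mem [Algebra k A] {aE : E →ₗ[A] Derivation k A A} (halt : brE.IsAlt)
    (hleib : ∀ (s t : E) (f : A), brE s (f • t) = f • brE s t + (aE s) f • t)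
    (hker : ∀ ℓ ∈ LinearMap.ker p, aE ℓ = 0) (f : A) {z : E} (hz : z ∈ kernelCentre brE p) :
    f • z ∈ kernelCentre brE p :=
  ⟨Submodule.smul_mem _ f hz.1, fun ℓ hℓ => by
    rw [bracket_smul_left halt hleib, hz.2 ℓ hℓ, hker ℓ hℓ, smul_zero, Derivation.zero_apply,
      zero_smul, sub_zero]⟩

theorem bracket_mem [Module k Q] {brQ : Q →ₗ[k] Q →ₗ[k] Q} (halt : brE.IsAlt)
    (hjac : ∀ x y z : E, brE x (brE y z) + brE y (brE z x) + brE z (brE x y) = 0)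
    (hpbr : ∀ e₁ e₂ : E, p (brE e₁ e₂) = brQ (p e₁) (p e₂)) (x : E) {z : E}
    (hz : z ∈ kernelCentre brE p) : brE x z ∈ kernelCentre brE p := by
  have hker_ideal : ∀ y ℓ, ℓ ∈ LinearMap.ker p → brE y ℓ ∈ LinearMap.ker p := fun y ℓ hℓ => by
    rw [LinearMap.mem_ker, hpbr, LinearMap.mem_ker.mp hℓ, map_zero]
  refine ⟨hker_ideal x z hz.1, fun ℓ hℓ => ?_⟩
  rw [bracket_bracket_left halt hjac, hz.2 ℓ hℓ, hz.2 _ (hker_ideal x ℓ hℓ), map_zero, sub_zero]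

theorem bracket_eq_of_map_eq (halt : brE.IsAlt) {x x' z : E} (hx : p x = p x')
    (hz : z ∈ kernelCentre brE p) : brE x z = brE x' z := by
  have hdiff : x - x' ∈ LinearMap.ker p := by rw [LinearMap.mem_ker, map_sub, hx, sub_self]
  rw [← sub_eq_zero, ← LinearMap.sub_apply, ← map_sub, bracket_left_eq_zero halt hz hdiff]

theorem smul_bracket [Algebra k A] {aE : E →ₗ[A] Derivation k A A} (halt : brE.IsAlt)
    (hleib : ∀ (s t : E) (f : A), brE s (f • t) = f • brE s t + (aE s) f • t)
    (hker : ∀ ℓ ∈ LinearMap.ker p, aE ℓ = 0) (f : A) (x : E) {z : E}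
    (hz : z ∈ kernelCentre brE p) : brE (f • x) z = f • brE x z := by
  rw [bracket_smul_left halt hleib, hker z hz.1, Derivation.zero_apply, zero_smul, sub_zero]

end kernelCentre

end KernelCentre

theorem extension_induces_representation_on_centre_general
    (k A E Q : Type*) [Field k] [CommRing A] [Algebra k A]
    [AddCommGroup E] [Module k E] [Module A E]
    [AddCommGroup Q] [Module k Q] [Module A Q]
    -- Lie-Rinehart structure on E
    (brE : E →ₗ[k] E →ₗ[k] E) (aE : E →ₗ[A] Derivation k A A)
    (haltE : ∀ x : E, brE x x = 0)
    (hjacE : ∀ x y z : E, brE x (brE y z) + brE y (brE z x) + brE z (brE x y) = 0)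
    (hleibE : ∀ (s t : E) (f : A), brE s (f • t) = f • brE s t + (aE s) f • t)
    -- Lie-Rinehart structure on Q
    (brQ : Q →ₗ[k] Q →ₗ[k] Q) (bQ : Q →ₗ[A] Derivation k A A)
    -- the surjective morphism p with kernel L
    (p : E →ₗ[A] Q)
    (hpbr : ∀ e₁ e₂ : E, p (brE e₁ e₂) = brQ (p e₁) (p e₂))
    (hpa : ∀ e : E, bQ (p e) = aE e)
    -- the centre of the kernel L = ker p
    (Zc : E → Prop)
    (hZc : ∀ z : E, Zc z ↔ z ∈ LinearMap.ker p ∧ ∀ ℓ ∈ LinearMap.ker p, brE z ℓ = 0) :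
    -- (i) Z(L) is an A-submodule of L
    (Zc 0) ∧
    (∀ z w : E, Zc z → Zc w → Zc (z + w)) ∧
    (∀ (f : A) (z : E), Zc z → Zc (f • z)) ∧
    -- (ii) [x', z] is central, and is independent of the choice of the lift x'
    (∀ (x' z : E), Zc z → Zc (brE x' z)) ∧
    (∀ (x' x'' z : E), p x' = p x'' → Zc z → brE x' z = brE x'' z) ∧
    -- (iii) the induced map ρ(x)(z) = [x',z] (expressed via lifts) is A-linear in x,
    -- satisfies the Leibniz rule in z, and is a morphism of Lie brackets
    (∀ (x' z : E) (f : A), Zc z → brE (f • x') z = f • brE x' z) ∧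
    (∀ (x' y' z : E), Zc z → brE (x' + y') z = brE x' z + brE y' z) ∧
    (∀ (x' z : E) (f : A), Zc z → brE x' (f • z) = f • brE x' z + (bQ (p x')) f • z) ∧
    (∀ (x' y' w' z : E), p w' = brQ (p x') (p y') → Zc z →
      brE w' z = brE x' (brE y' z) - brE y' (brE x' z)) := by
  obtain rfl : Zc = (· ∈ kernelCentre brE p) := funext fun z => propext (hZc z)
  have hker : ∀ ℓ ∈ LinearMap.ker p, aE ℓ = 0 := fun _ => anchor_eq_zero_of_mem_ker hpa
  refine ⟨kernelCentre.zero_mem, fun z w => kernelCentre.add_mem,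
    fun f z => kernelCentre.smul_mem haltE hleibE hker f,
    fun x z => kernelCentre.bracket_mem haltE hjacE hpbr x,
    fun x x' z => kernelCentre.bracket_eq_of_map_eq haltE,
    fun x z f => kernelCentre.smul_bracket haltE hleibE hker f x,
    fun x y z _ => by rw [map_add, LinearMap.add_apply],
    fun x z f _ => by rw [hleibE, hpa], ?_⟩
  intro x y w z hw hz
  have hlift : p w = p (brE x y) := by rw [hw, hpbr]
  rw [kernelCentre.bracket_eq_of_map_eq haltE hlift hz, bracket_bracket_left haltE hjacE]

/-- Let `0 → L → E →ᵖ Q → 0` be an extension of `(k,A)`-Lie-Rinehart algebras, with `bQ` the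
anchor of `Q`, and let `Z(L)` be the centre of the kernel `L = ker p`. Then:
(i) `Z(L)` is an `A`-submodule of `L`;
(ii) for `x ∈ Q` and `z ∈ Z(L)`, the element `[x',z]`, for any lift `x'` of `x`, lies in `Z(L)`
and is independent of the choice of lift;
(iii) the resulting map `ρ(x)(z) = [x',z]` is `A`-linear in `x`, satisfies
`ρ(x)(f·z) = f·ρ(x)(z) + bQ(x)(f)·z` and `ρ([x,y]) = ρ(x)∘ρ(y) − ρ(y)∘ρ(x)`.
Thus the extension induces a representation of `Q` on `Z(L)`. -/
theorem extension_induces_representation_on_centre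
    (k A E Q : Type*) [Field k] [CommRing A] [Algebra k A]
    [AddCommGroup E] [Module k E] [Module A E] [IsScalarTower k A E]
    [AddCommGroup Q] [Module k Q] [Module A Q] [IsScalarTower k A Q]
    -- Lie-Rinehart structure on E
    (brE : E →ₗ[k] E →ₗ[k] E) (aE : E →ₗ[A] Derivation k A A)
    (haltE : ∀ x : E, brE x x = 0)
    (hjacE : ∀ x y z : E, brE x (brE y z) + brE y (brE z x) + brE z (brE x y) = 0)
    (hleibE : ∀ (s t : E) (f : A), brE s (f • t) = f • brE s t + (aE s) f • t)
    (hanchE : ∀ s t : E, aE (brE s t) = ⁅aE s, aE t⁆)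
    -- Lie-Rinehart structure on Q
    (brQ : Q →ₗ[k] Q →ₗ[k] Q) (bQ : Q →ₗ[A] Derivation k A A)
    (haltQ : ∀ x : Q, brQ x x = 0)
    (hjacQ : ∀ x y z : Q, brQ x (brQ y z) + brQ y (brQ z x) + brQ z (brQ x y) = 0)
    (hleibQ : ∀ (s t : Q) (f : A), brQ s (f • t) = f • brQ s t + (bQ s) f • t)
    (hanchQ : ∀ s t : Q, bQ (brQ s t) = ⁅bQ s, bQ t⁆)
    -- the surjective morphism p with kernel L
    (p : E →ₗ[A] Q)
    (hp : Function.Surjective p)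
    (hpbr : ∀ e₁ e₂ : E, p (brE e₁ e₂) = brQ (p e₁) (p e₂))
    (hpa : ∀ e : E, bQ (p e) = aE e)
    -- the centre of the kernel L = ker p
    (Zc : E → Prop)
    (hZc : ∀ z : E, Zc z ↔ z ∈ LinearMap.ker p ∧ ∀ ℓ ∈ LinearMap.ker p, brE z ℓ = 0) :
    -- (i) Z(L) is an A-submodule of L
    (Zc 0) ∧
    (∀ z w : E, Zc z → Zc w → Zc (z + w)) ∧
    (∀ (f : A) (z : E), Zc z → Zc (f • z)) ∧
    -- (ii) [x', z] is central, and is independent of the choice of the lift x'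
    (∀ (x' z : E), Zc z → Zc (brE x' z)) ∧
    (∀ (x' x'' z : E), p x' = p x'' → Zc z → brE x' z = brE x'' z) ∧
    -- (iii) the induced map ρ(x)(z) = [x',z] (expressed via lifts) is A-linear in x,
    -- satisfies the Leibniz rule in z, and is a morphism of Lie brackets
    (∀ (x' z : E) (f : A), Zc z → brE (f • x') z = f • brE x' z) ∧
    (∀ (x' y' z : E), Zc z → brE (x' + y') z = brE x' z + brE y' z) ∧
    (∀ (x' z : E) (f : A), Zc z → brE x' (f • z) = f • brE x' z + (bQ (p x')) f • z) ∧
    (∀ (x' y' w' z : E), p w' = brQ (p x') (p y') → Zc z →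
      brE w' z = brE x' (brE y' z) - brE y' (brE x' z)) :=
  extension_induces_representation_on_centre_general k A E Q brE aE haltE hjacE hleibE brQ bQ p hpbr
    hpa Zc hZc
end

section
/- Let k be a field, A a commutative associative unital k-algebra, S a set, and a_S : S → Der_k(A) a map; let ā_S : FreeLie_k(S) → Der_k(A) be the morphism of k-Lie algebras induced by a_S via the universal property of the free Lie algebra, and let L_{A,S} = A ⊗_k FreeLie_k(S) be the free (k,A)-Lie-Rinehart algebra, i.e. the transformation Lie-Rinehart algebra of (FreeLie_k(S), ā_S). Let (L, a_L) be any (k,A)-Lie-Rinehart algebra and f : S → L a map such that a_L(f(s)) = a_S(s) for every s ∈ S. Then there exists a unique morphism of (k,A)-Lie-Rinehart algebras g : L_{A,S} → L (A-linear, bracket-preserving, and satisfying a_L ∘ g = anchor of L_{A,S}) such that g(1 ⊗ ι(s)) = f(s) for all s ∈ S, where ι : S → FreeLie_k(S) is the canonical map. -/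
/-!
An alternating bilinear bracket satisfying Jacobi makes `L` a `k`-Lie algebra, so `f` extends to a
Lie map `φ : FreeLie_k(S) → L`; since `a_L` is a Lie map, `a_L ∘ φ` and `ā_S` are Lie maps agreeing
on generators, hence equal. The `A`-linear extension `α ⊗ ξ ↦ α • φ ξ` preserves brackets because
the Leibniz rule expands `⁅α • x, β • y⁆` into exactly the transformation bracket formula.
Conversely, any morphism restricts on `1 ⊗ FreeLie_k(S)` to a Lie map extending `f`, which pins it
down by freeness and `A`-linearity.
-/

open TensorProduct

section LieOfBilinear

variable {k L : Type*} [CommRing k] [AddCommGroup L] [Module k L]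

theorem bilinear_antisymm_of_alternating {br : L →ₗ[k] L →ₗ[k] L} (halt : ∀ x, br x x = 0)
    (x y : L) : br x y = -br y x := by
  have h := halt (x + y)
  simp only [map_add, LinearMap.add_apply, halt, zero_add, add_zero] at h
  exact eq_neg_of_add_eq_zero_right h

abbrev LieRing.ofBilinear (br : L →ₗ[k] L →ₗ[k] L) (halt : ∀ x, br x x = 0)
    (hjac : ∀ x y z, br x (br y z) + br y (br z x) + br z (br x y) = 0) : LieRing L where
  bracket x y := br x y
  add_lie x y z := by simp only [map_add, LinearMap.add_apply]
  lie_add x y z := map_add _ _ _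
  lie_self := halt
  leibniz_lie x y z := by
    have h := hjac x y z
    rw [bilinear_antisymm_of_alternating halt z (br x y), bilinear_antisymm_of_alternating halt z x,
      map_neg] at h
    change br x (br y z) = br (br x y) z + br y (br x z)
    linear_combination (norm := abel) h

abbrev LieAlgebra.ofBilinear (br : L →ₗ[k] L →ₗ[k] L) (halt : ∀ x, br x x = 0)
    (hjac : ∀ x y z, br x (br y z) + br y (br z x) + br z (br x y) = 0) :
    letI := LieRing.ofBilinear br halt hjac
    LieAlgebra k L :=
  letI := LieRing.ofBilinear br halt hjac
  { lie_smul t x y := map_smul (br x) t y }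

end LieOfBilinear

theorem FreeLieAlgebra.comp_lift {R X L M : Type*} [CommRing R] [LieRing L] [LieAlgebra R L]
    [LieRing M] [LieAlgebra R M] (ψ : L →ₗ⁅R⁆ M) (f : X → L) :
    ψ.comp (lift R f) = lift R (ψ ∘ f) :=
  hom_ext fun x => by simp

section LieRinehart

variable {k A L : Type*} [CommRing k] [CommRing A] [Algebra k A] [LieRing L] [Module A L]
  {aL : L →ₗ[A] Derivation k A A}

theorem lie_smul_smul_of_leibniz
    (hleib : ∀ (s t : L) (f : A), ⁅s, f • t⁆ = f • ⁅s, t⁆ + aL s f • t) (α β : A) (x y : L) :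
    ⁅α • x, β • y⁆ = (α * β) • ⁅x, y⁆ + (α * aL x β) • y - (β * aL y α) • x := by
  rw [hleib, ← lie_skew, hleib, ← lie_skew y x, map_smul]
  simp only [Derivation.smul_apply, smul_eq_mul, smul_add, smul_neg, smul_smul, mul_comm β α]
  abel

variable [LieAlgebra k L] [IsScalarTower k A L]

theorem anchor_freeLieAlgebra_lift {S : Type*} (hanch : ∀ s t, aL ⁅s, t⁆ = ⁅aL s, aL t⁆)
    {f : S → L} {aS : S → Derivation k A A} (hf : ∀ s, aL (f s) = aS s)
    (ξ : FreeLieAlgebra k S) : aL (FreeLieAlgebra.lift k f ξ) = FreeLieAlgebra.lift k aS ξ := by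
  let ψ : L →ₗ⁅k⁆ Derivation k A A := { aL.restrictScalars k with map_lie' := hanch _ _ }
  have hψ : ψ ∘ f = aS := funext hf
  exact LieHom.congr_fun (hψ ▸ FreeLieAlgebra.comp_lift ψ f) ξ

theorem liftBaseChange_transformation_bracket {g : Type*} [LieRing g] [LieAlgebra k g]
    (hleib : ∀ (s t : L) (f : A), ⁅s, f • t⁆ = f • ⁅s, t⁆ + aL s f • t)
    {ρ : g →ₗ⁅k⁆ Derivation k A A} {φ : g →ₗ⁅k⁆ L} (hφ : ∀ ξ, aL (φ ξ) = ρ ξ)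
    (α β : A) (ξ η : g) :
    φ.toLinearMap.liftBaseChange A
        ((α * β) ⊗ₜ[k] ⁅ξ, η⁆ + (α * ρ ξ β) ⊗ₜ[k] η - (β * ρ η α) ⊗ₜ[k] ξ) =
      ⁅α • φ ξ, β • φ η⁆ := by
  simp [lie_smul_smul_of_leibniz hleib, hφ]

theorem eq_liftBaseChange_freeLieAlgebra_lift {S : Type*}
    (f : S → L) (G : A ⊗[k] FreeLieAlgebra k S →ₗ[A] L)
    (hG : ∀ ξ η, G (1 ⊗ₜ ⁅ξ, η⁆) = ⁅G (1 ⊗ₜ ξ), G (1 ⊗ₜ η)⁆)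
    (hGof : ∀ s, G (1 ⊗ₜ FreeLieAlgebra.of k s) = f s) :
    G = (FreeLieAlgebra.lift k f).toLinearMap.liftBaseChange A := by
  let χ : FreeLieAlgebra k S →ₗ⁅k⁆ L :=
    { (LinearMap.liftBaseChangeEquiv A).symm G with map_lie' := hG _ _ }
  have hχ : χ = FreeLieAlgebra.lift k f :=
    FreeLieAlgebra.hom_ext fun s => by rw [FreeLieAlgebra.lift_of_apply]; exact hGof s
  exact (LinearMap.liftBaseChangeEquiv A).symm_apply_eq.mp (congrArg LieHom.toLinearMap hχ)

end LieRinehart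

/-- **Universal property of the free Lie-Rinehart algebra** (Proposition `mapexists`).
Let `k` be a field, `A` a commutative `k`-algebra, `S` a set and `a_S : S → Der_k(A)` a map,
with `ā_S : FreeLie_k(S) → Der_k(A)` the induced Lie algebra morphism. Let
`L_{A,S} = A ⊗[k] FreeLie_k(S)` be the free `(k,A)`-Lie-Rinehart algebra, i.e. the
transformation Lie-Rinehart algebra of `(FreeLie_k(S), ā_S)`, with bracket `brF` and anchor
`anchF`. Let `(L, a_L)` be any `(k,A)`-Lie-Rinehart algebra and `f : S → L` a map with
`a_L(f(s)) = a_S(s)`. Then there is a unique morphism of `(k,A)`-Lie-Rinehart algebras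
`g : L_{A,S} → L` with `g(1 ⊗ ι(s)) = f(s)` for all `s ∈ S`. -/
theorem free_lie_rinehart_universal_property
    (k A S L : Type*) [Field k] [CommRing A] [Algebra k A]
    [AddCommGroup L] [Module k L] [Module A L] [IsScalarTower k A L]
    (aS : S → Derivation k A A)
    -- the bracket of the free Lie-Rinehart algebra L_{A,S} = A ⊗[k] FreeLie_k(S)
    (brF : (A ⊗[k] FreeLieAlgebra k S) →ₗ[k] (A ⊗[k] FreeLieAlgebra k S) →ₗ[k]
      (A ⊗[k] FreeLieAlgebra k S))
    (hbrF : ∀ (α β : A) (ξ η : FreeLieAlgebra k S),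
      brF (α ⊗ₜ[k] ξ) (β ⊗ₜ[k] η)
        = (α * β) ⊗ₜ[k] ⁅ξ, η⁆
          + (α * (FreeLieAlgebra.lift k aS ξ) β) ⊗ₜ[k] η
          - (β * (FreeLieAlgebra.lift k aS η) α) ⊗ₜ[k] ξ)
    -- the anchor of L_{A,S}
    (anchF : (A ⊗[k] FreeLieAlgebra k S) →ₗ[A] Derivation k A A)
    (hanchF : ∀ (α : A) (ξ : FreeLieAlgebra k S),
      anchF (α ⊗ₜ[k] ξ) = α • (FreeLieAlgebra.lift k aS ξ))
    -- Lie-Rinehart structure on L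
    (brL : L →ₗ[k] L →ₗ[k] L) (aL : L →ₗ[A] Derivation k A A)
    (haltL : ∀ x : L, brL x x = 0)
    (hjacL : ∀ x y z : L, brL x (brL y z) + brL y (brL z x) + brL z (brL x y) = 0)
    (hleibL : ∀ (s t : L) (f : A), brL s (f • t) = f • brL s t + (aL s) f • t)
    (hanchL : ∀ s t : L, aL (brL s t) = ⁅aL s, aL t⁆)
    -- the map f : S → L compatible with the anchors
    (f : S → L)
    (hf : ∀ s : S, aL (f s) = aS s) :
    ∃! g : (A ⊗[k] FreeLieAlgebra k S) →ₗ[A] L,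
      (∀ x y : A ⊗[k] FreeLieAlgebra k S, g (brF x y) = brL (g x) (g y)) ∧
      (∀ x : A ⊗[k] FreeLieAlgebra k S, aL (g x) = anchF x) ∧
      (∀ s : S, g ((1 : A) ⊗ₜ[k] FreeLieAlgebra.of k s) = f s) := by
  let _ := LieRing.ofBilinear brL haltL hjacL
  let _ := LieAlgebra.ofBilinear brL haltL hjacL
  have hanchor := anchor_freeLieAlgebra_lift (aL := aL) hanchL hf
  set G := (FreeLieAlgebra.lift k f).toLinearMap.liftBaseChange A
  refine ⟨G, ⟨fun x y => ?_, fun x => ?_, fun s => by simp [G]⟩, fun G' ⟨hG', _, hG'of⟩ => ?_⟩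
  · refine LinearMap.congr_fun₂ (f := brF.compr₂ (G.restrictScalars k))
      (g := brL.compl₁₂ (G.restrictScalars k) (G.restrictScalars k)) ?_ x y
    refine TensorProduct.ext' fun α ξ => TensorProduct.ext' fun β η => ?_
    simp only [LinearMap.compr₂_apply, LinearMap.compl₁₂_apply, LinearMap.coe_restrictScalars,
      hbrF]
    exact liftBaseChange_transformation_bracket hleibL hanchor α β ξ η
  · exact LinearMap.congr_fun (TensorProduct.AlgebraTensorModule.ext (g := aL ∘ₗ G)
      (h := anchF) fun α ξ => by simp [G, hanchF, hanchor]) x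
  · refine eq_liftBaseChange_freeLieAlgebra_lift f G' (fun ξ η => ?_) hG'of
    have h := hG' (1 ⊗ₜ ξ) (1 ⊗ₜ η)
    simp only [hbrF, mul_one, Derivation.map_one_eq_zero, mul_zero, zero_tmul, add_zero,
      sub_zero] at h
    exact h
end

section
/- With Ũ = Ũ_{A,S} as defined in the context, let ι_A : A → Ũ, α ↦ ⟨α⟩ (a k-algebra homomorphism by the defining relations), and let j_L : L_{A,S} → Ũ be the A-linear map determined by j_L(α ⊗ ξ) = ⟨α⟩ · λ(ξ), where λ : FreeLie_k(S) → Ũ is the k-Lie algebra morphism into Ũ with its commutator bracket induced by s ↦ ⟨s⟩. Then Ũ satisfies the universal property of the universal enveloping algebra of the free Lie-Rinehart algebra L_{A,S}: for every unital associative k-algebra B, every k-algebra homomorphism i : A → B, and every morphism of k-Lie algebras j : L_{A,S} → B (B with its commutator bracket) satisfying i(α)·j(x) = j(α·x) and j(x)·i(α) − i(α)·j(x) = i(a(x)(α)) for all α ∈ A and x ∈ L_{A,S} (where a is the anchor of L_{A,S}), there exists a unique k-algebra homomorphism v : Ũ → B such that v ∘ ι_A = i and v ∘ j_L = j. -/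
/-!
`Ũ` is presented by generators and relations, so an algebra map out of it is the same as a
pair `(i, t)` with `i : A → B` an algebra map and `t : S → B` satisfying the commutation rule
`t s · i α = i α · t s + i (a_S(s)(α))`. Given `(i, j)`, take `t s = j (1 ⊗ s)`; the rule is the
anchor compatibility of `j` at `1 ⊗ s`. Since `ξ ↦ j (1 ⊗ ξ)` is a Lie map (the bracket of
`L_{A,S}` restricts to the bracket of `FreeLie_k(S)` on `1 ⊗ FreeLie_k(S)`), the induced `v`
satisfies `v ∘ λ = j (1 ⊗ ·)`, and `A`-linearity of `j` gives `v ∘ j_L = j`. Uniqueness holds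
because `Ũ` is generated by the `⟨α⟩` and the `⟨s⟩ = j_L (1 ⊗ s)`.
-/

open TensorProduct

attribute [local instance 100] LieRing.ofAssociativeRing

/-- The relations defining `Ũ_{A,S}` inside the free associative algebra on `A ⊔ S`:
`⟨α⟩ + ⟨β⟩ = ⟨α+β⟩`, `⟨α⟩⟨β⟩ = ⟨αβ⟩`, `⟨s⟩⟨α⟩ = ⟨α⟩⟨s⟩ + ⟨a_S(s)(α)⟩`, `c·1 = ⟨c·1_A⟩`. -/
inductive UtildeRel (k A S : Type*) [CommRing k] [CommRing A] [Algebra k A]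
    (aS : S → Derivation k A A) :
    FreeAlgebra k (A ⊕ S) → FreeAlgebra k (A ⊕ S) → Prop
  | add (α β : A) : UtildeRel k A S aS
      (FreeAlgebra.ι k (Sum.inl α) + FreeAlgebra.ι k (Sum.inl β))
      (FreeAlgebra.ι k (Sum.inl (α + β)))
  | mul (α β : A) : UtildeRel k A S aS
      (FreeAlgebra.ι k (Sum.inl α) * FreeAlgebra.ι k (Sum.inl β))
      (FreeAlgebra.ι k (Sum.inl (α * β)))
  | der (s : S) (α : A) : UtildeRel k A S aS
      (FreeAlgebra.ι k (Sum.inr s) * FreeAlgebra.ι k (Sum.inl α))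
      (FreeAlgebra.ι k (Sum.inl α) * FreeAlgebra.ι k (Sum.inr s)
        + FreeAlgebra.ι k (Sum.inl (aS s α)))
  | scalar (c : k) : UtildeRel k A S aS
      (algebraMap k (FreeAlgebra k (A ⊕ S)) c)
      (FreeAlgebra.ι k (Sum.inl (algebraMap k A c)))

/-- `Ũ = Ũ_{A,S}`, the quotient of the free associative `k`-algebra on `A ⊔ S` by the
two-sided ideal generated by the relations `UtildeRel`. -/
abbrev Utilde (k A S : Type*) [CommRing k] [CommRing A] [Algebra k A]
    (aS : S → Derivation k A A) : Type _ :=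
  RingQuot (UtildeRel k A S aS)

/-- The class `⟨α⟩ ∈ Ũ` of a generator coming from `α ∈ A` (so `ι_A : A → Ũ, α ↦ ⟨α⟩`). -/
noncomputable def UtildeA (k A S : Type*) [CommRing k] [CommRing A] [Algebra k A]
    (aS : S → Derivation k A A) : A → Utilde k A S aS :=
  fun α => RingQuot.mkAlgHom k (UtildeRel k A S aS) (FreeAlgebra.ι k (Sum.inl α))

/-- The class `⟨s⟩ ∈ Ũ` of a generator coming from `s ∈ S`. -/
noncomputable def UtildeS (k A S : Type*) [CommRing k] [CommRing A] [Algebra k A]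
    (aS : S → Derivation k A A) : S → Utilde k A S aS :=
  fun s => RingQuot.mkAlgHom k (UtildeRel k A S aS) (FreeAlgebra.ι k (Sum.inr s))

namespace Utilde

variable {k A S : Type*} [CommRing k] [CommRing A] [Algebra k A] {aS : S → Derivation k A A}
  {B : Type*} [Ring B] [Algebra k B]

theorem utildeA_one : UtildeA k A S aS 1 = 1 := by
  simpa [UtildeA] using (RingQuot.mkAlgHom_rel k (UtildeRel.scalar (aS := aS) (1 : k))).symm

theorem algHom_ext {f g : Utilde k A S aS →ₐ[k] B}
    (hA : ∀ α, f (UtildeA k A S aS α) = g (UtildeA k A S aS α))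
    (hS : ∀ s, f (UtildeS k A S aS s) = g (UtildeS k A S aS s)) : f = g := by
  apply RingQuot.ringQuot_ext'
  apply FreeAlgebra.hom_ext
  funext x
  cases x with
  | inl α => exact hA α
  | inr s => exact hS s

noncomputable def lift (i : A →ₐ[k] B) (t : S → B)
    (ht : ∀ s α, t s * i α = i α * t s + i (aS s α)) : Utilde k A S aS →ₐ[k] B :=
  RingQuot.liftAlgHom k ⟨FreeAlgebra.lift k (Sum.elim i t), fun x y h => by
    induction h with
    | add α β => simp
    | mul α β => simp
    | der s α => simpa using ht s α
    | scalar c => simp⟩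

variable (i : A →ₐ[k] B) (t : S → B) (ht : ∀ s α, t s * i α = i α * t s + i (aS s α))

@[simp]
theorem lift_utildeA (α : A) : lift i t ht (UtildeA k A S aS α) = i α := by
  simp [lift, UtildeA]

@[simp]
theorem lift_utildeS (s : S) : lift i t ht (UtildeS k A S aS s) = t s := by
  simp [lift, UtildeS]

end Utilde

section

variable {k A L B : Type*} [CommRing k] [CommRing A] [Algebra k A] [LieRing L] [LieAlgebra k L]
  [Ring B] [Algebra k B]

def oneTmulLieHom (j : A ⊗[k] L →ₗ[k] B)
    (hj : ∀ ξ η : L, j (1 ⊗ₜ ⁅ξ, η⁆) = ⁅j (1 ⊗ₜ ξ), j (1 ⊗ₜ η)⁆) : L →ₗ⁅k⁆ B :=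
  { j ∘ₗ TensorProduct.mk k A L 1 with map_lie' := hj _ _ }

@[simp]
theorem oneTmulLieHom_apply (j : A ⊗[k] L →ₗ[k] B)
    (hj : ∀ ξ η : L, j (1 ⊗ₜ ⁅ξ, η⁆) = ⁅j (1 ⊗ₜ ξ), j (1 ⊗ₜ η)⁆) (ξ : L) :
    oneTmulLieHom j hj ξ = j (1 ⊗ₜ ξ) :=
  rfl

end

/-- **`Ũ_{A,S}` is the universal enveloping algebra of the free Lie-Rinehart algebra
`L_{A,S} = A ⊗[k] FreeLie_k(S)`.** With `ι_A : A → Ũ, α ↦ ⟨α⟩`, `λ : FreeLie_k(S) → Ũ` the Lie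
algebra morphism (into `Ũ` with the commutator bracket) induced by `s ↦ ⟨s⟩`, and
`j_L : L_{A,S} → Ũ` determined by `j_L(α ⊗ ξ) = ⟨α⟩·λ(ξ)`: for every unital associative
`k`-algebra `B`, every `k`-algebra homomorphism `i : A → B`, and every `k`-Lie algebra morphism
`j : L_{A,S} → B` (for the commutator bracket on `B`) satisfying `i(α)·j(x) = j(α·x)` and
`j(x)·i(α) − i(α)·j(x) = i(a(x)(α))`, where `a = anchF` is the anchor of `L_{A,S}`, there is a
unique `k`-algebra homomorphism `v : Ũ → B` with `v ∘ ι_A = i` and `v ∘ j_L = j`. -/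
theorem utilde_universal_property
    (k A S : Type*) [Field k] [CommRing A] [Algebra k A]
    (aS : S → Derivation k A A)
    -- the bracket and anchor of the free Lie-Rinehart algebra L_{A,S}
    (brF : (A ⊗[k] FreeLieAlgebra k S) →ₗ[k] (A ⊗[k] FreeLieAlgebra k S) →ₗ[k]
      (A ⊗[k] FreeLieAlgebra k S))
    (hbrF : ∀ (α β : A) (ξ η : FreeLieAlgebra k S),
      brF (α ⊗ₜ[k] ξ) (β ⊗ₜ[k] η)
        = (α * β) ⊗ₜ[k] ⁅ξ, η⁆
          + (α * (FreeLieAlgebra.lift k aS ξ) β) ⊗ₜ[k] η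
          - (β * (FreeLieAlgebra.lift k aS η) α) ⊗ₜ[k] ξ)
    (anchF : (A ⊗[k] FreeLieAlgebra k S) →ₗ[A] Derivation k A A)
    (hanchF : ∀ (α : A) (ξ : FreeLieAlgebra k S),
      anchF (α ⊗ₜ[k] ξ) = α • (FreeLieAlgebra.lift k aS ξ))
    -- the map j_L : L_{A,S} → Ũ, determined by j_L(α ⊗ ξ) = ⟨α⟩ · λ(ξ)
    (jL : (A ⊗[k] FreeLieAlgebra k S) →ₗ[k] Utilde k A S aS)
    (hjL : ∀ (α : A) (ξ : FreeLieAlgebra k S),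
      jL (α ⊗ₜ[k] ξ) = UtildeA k A S aS α * FreeLieAlgebra.lift k (UtildeS k A S aS) ξ)
    -- the test algebra B and the maps i, j
    (B : Type*) [Ring B] [Algebra k B]
    (i : A →ₐ[k] B)
    (j : (A ⊗[k] FreeLieAlgebra k S) →ₗ[k] B)
    (hjlie : ∀ x y : A ⊗[k] FreeLieAlgebra k S, j (brF x y) = j x * j y - j y * j x)
    (hij₁ : ∀ (α : A) (x : A ⊗[k] FreeLieAlgebra k S), i α * j x = j (α • x))
    (hij₂ : ∀ (α : A) (x : A ⊗[k] FreeLieAlgebra k S),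
      j x * i α - i α * j x = i (anchF x α)) :
    ∃! v : Utilde k A S aS →ₐ[k] B,
      (∀ α : A, v (UtildeA k A S aS α) = i α) ∧
      (∀ x : A ⊗[k] FreeLieAlgebra k S, v (jL x) = j x) := by
  let t : S → B := fun s => j (1 ⊗ₜ FreeLieAlgebra.of k s)
  have ht : ∀ s α, t s * i α = i α * t s + i (aS s α) := fun s α => by
    have h := hij₂ α (1 ⊗ₜ FreeLieAlgebra.of k s)
    rw [hanchF, one_smul, FreeLieAlgebra.lift_of_apply] at h
    rw [← h]
    abel
  have hj_one_tmul_lie : ∀ ξ η : FreeLieAlgebra k S, j (1 ⊗ₜ ⁅ξ, η⁆) = ⁅j (1 ⊗ₜ ξ), j (1 ⊗ₜ η)⁆ :=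
    fun ξ η => by simpa [hbrF, Ring.lie_def] using hjlie (1 ⊗ₜ ξ) (1 ⊗ₜ η)
  let v : Utilde k A S aS →ₐ[k] B := Utilde.lift i t ht
  have hv_lift : ∀ ξ, v (FreeLieAlgebra.lift k (UtildeS k A S aS) ξ) = j (1 ⊗ₜ ξ) :=
    LieHom.congr_fun (f := (v : Utilde k A S aS →ₗ⁅k⁆ B).comp _)
      (FreeLieAlgebra.hom_ext (F₂ := oneTmulLieHom j hj_one_tmul_lie) fun s => by simp [v, t])
  have hvj : ∀ x, v (jL x) = j x := fun x => by
    induction x using TensorProduct.induction_on with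
    | zero => simp
    | tmul α ξ =>
      rw [hjL, map_mul, Utilde.lift_utildeA, hv_lift, hij₁, smul_tmul', smul_eq_mul, mul_one]
    | add x y hx hy => simp [hx, hy]
  refine ⟨v, ⟨Utilde.lift_utildeA i t ht, hvj⟩, fun v' ⟨hA, hL⟩ =>
    Utilde.algHom_ext (fun α => by simp [v, hA]) fun s => ?_⟩
  have hjL_of : jL (1 ⊗ₜ FreeLieAlgebra.of k s) = UtildeS k A S aS s := by
    rw [hjL, FreeLieAlgebra.lift_of_apply, Utilde.utildeA_one, one_mul]
  rw [← hjL_of, hL, hvj]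
end

section
/- Let k be a field, A a commutative associative unital k-algebra, S a set, a_S : S → Der_k(A) a map, and L_{A,S} = A ⊗_k FreeLie_k(S) the free (k,A)-Lie-Rinehart algebra (the transformation Lie-Rinehart algebra of (FreeLie_k(S), ā_S), with anchor a). Let (M, ρ) be a representation of L_{A,S}, i.e. an A-module M with an A-linear map ρ : L_{A,S} → End_k(M) satisfying ρ(x)(f·m) = f·ρ(x)(m) + a(x)(f)·m and ρ([x,y]) = [ρ(x), ρ(y)]. Then for every map δ₀ : S → M there exists a unique A-linear map D : L_{A,S} → M such that D(1 ⊗ ι(s)) = δ₀(s) for all s ∈ S and D([x,y]) = ρ(x)(D(y)) − ρ(y)(D(x)) for all x,y ∈ L_{A,S} (i.e. D is a derivation of the free Lie-Rinehart algebra with values in M extending δ₀). -/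
/-!
A Lie derivation `d : L → M` is the same thing as a Lie algebra section `x ↦ (x, d x)` of the
projection `L ⋉ M → L`. Sections out of a free Lie algebra are freely determined by their values
on the generators, hence so are Lie derivations `FreeLie_k(S) → M`.

On the transformation Lie-Rinehart algebra `A ⊗ L`, an `A`-linear map `D` is determined by its
restriction `d = D (1 ⊗ ·)`, and expanding both sides of `D [x, y] = ρ x (D y) - ρ y (D x)` on pure
tensors with the Leibniz rule of `ρ` shows that `D` is a derivation exactly when `d` is a Lie
derivation for the action `ξ ↦ ρ (1 ⊗ ξ)` of `L` on `M`.
-/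

open TensorProduct

namespace LieModule

@[ext]
structure SemidirectProduct (L M : Type*) [LieRing L] [AddCommGroup M] [LieRingModule L M] where
  fst : L
  snd : M

namespace SemidirectProduct

variable {R L M : Type*} [LieRing L] [AddCommGroup M] [LieRingModule L M]

def equivProd : SemidirectProduct L M ≃ L × M where
  toFun x := (x.fst, x.snd)
  invFun x := ⟨x.1, x.2⟩

instance : AddCommGroup (SemidirectProduct L M) := equivProd.addCommGroup

instance : Bracket (SemidirectProduct L M) (SemidirectProduct L M) where
  bracket x y := ⟨⁅x.fst, y.fst⁆, ⁅x.fst, y.snd⁆ - ⁅y.fst, x.snd⁆⟩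

@[simp] lemma zero_eq_mk : (0 : SemidirectProduct L M) = ⟨0, 0⟩ := rfl

@[simp] lemma add_eq_mk (x y : SemidirectProduct L M) : x + y = ⟨x.fst + y.fst, x.snd + y.snd⟩ :=
  rfl

@[simp] lemma lie_eq_mk (x y : SemidirectProduct L M) :
    ⁅x, y⁆ = ⟨⁅x.fst, y.fst⁆, ⁅x.fst, y.snd⁆ - ⁅y.fst, x.snd⁆⟩ := rfl

instance : LieRing (SemidirectProduct L M) where
  add_lie _ _ _ := by simp; abel
  lie_add _ _ _ := by simp; abel
  lie_self _ := by simp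
  leibniz_lie _ _ _ := by simp; abel

variable [CommRing R] [LieAlgebra R L] [Module R M]

instance : Module R (SemidirectProduct L M) := equivProd.module R

@[simp] lemma smul_eq_mk (t : R) (x : SemidirectProduct L M) : t • x = ⟨t • x.fst, t • x.snd⟩ :=
  rfl

variable [LieModule R L M]

instance : LieAlgebra R (SemidirectProduct L M) where
  lie_smul _ _ _ := by simp [smul_sub]

variable (R L M) in
def fstHom : SemidirectProduct L M →ₗ⁅R⁆ L where
  toFun := fst
  map_add' _ _ := rfl
  map_smul' _ _ := rfl
  map_lie' := rfl

@[simp] lemma fstHom_apply (x : SemidirectProduct L M) : fstHom R L M x = x.fst := rfl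

end SemidirectProduct

end LieModule

namespace LieDerivation

open LieModule

variable {R L M : Type*} [CommRing R] [LieRing L] [LieAlgebra R L]
  [AddCommGroup M] [Module R M] [LieRingModule L M] [LieModule R L M]

def graph (d : LieDerivation R L M) : L →ₗ⁅R⁆ SemidirectProduct L M where
  toFun x := ⟨x, d x⟩
  map_add' _ _ := by simp
  map_smul' _ _ := by simp
  map_lie' := by simp

@[simp] lemma graph_apply (d : LieDerivation R L M) (x : L) : d.graph x = ⟨x, d x⟩ := rfl

def ofSection (φ : L →ₗ⁅R⁆ SemidirectProduct L M) (hφ : ∀ x, (φ x).fst = x) :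
    LieDerivation R L M where
  toFun x := (φ x).snd
  map_add' _ _ := by simp
  map_smul' _ _ := by simp
  leibniz' x y := by
    simp only [LinearMap.coe_mk, AddHom.coe_mk, LieHom.map_lie, SemidirectProduct.lie_eq_mk, hφ]

@[simp] lemma ofSection_apply (φ : L →ₗ⁅R⁆ SemidirectProduct L M) (hφ : ∀ x, (φ x).fst = x)
    (x : L) : ofSection φ hφ x = (φ x).snd := rfl

end LieDerivation

namespace FreeLieAlgebra

open LieModule

theorem existsUnique_lieDerivation (R : Type*) {X M : Type*} [CommRing R] [AddCommGroup M]
    [Module R M] [LieRingModule (FreeLieAlgebra R X) M] [LieModule R (FreeLieAlgebra R X) M]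
    (δ₀ : X → M) : ∃! d : LieDerivation R (FreeLieAlgebra R X) M, ∀ x, d (of R x) = δ₀ x := by
  set φ := lift R fun x ↦ (⟨of R x, δ₀ x⟩ : SemidirectProduct (FreeLieAlgebra R X) M)
  have hφ : (SemidirectProduct.fstHom R _ M).comp φ = LieHom.id :=
    hom_ext fun x ↦ by simp [φ, lift_of_apply]
  have hfst (ξ : FreeLieAlgebra R X) : (φ ξ).fst = ξ := LieHom.congr_fun hφ ξ
  refine ⟨.ofSection φ hfst, fun x ↦ by rw [LieDerivation.ofSection_apply, lift_of_apply], ?_⟩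
  intro d hd
  have hgraph : d.graph = φ := hom_ext fun x ↦ by simp [φ, lift_of_apply, hd]
  ext ξ
  simp [← hgraph]

end FreeLieAlgebra

namespace LieRinehart

variable {k A L M : Type*} [CommRing k] [CommRing A] [Algebra k A] [LieRing L] [LieAlgebra k L]
  [AddCommGroup M] [Module k M] [Module A M] [IsScalarTower k A M] [SMulCommClass k A M]

def IsTransformationBracket (a : L →ₗ⁅k⁆ Derivation k A A)
    (br : A ⊗[k] L →ₗ[k] A ⊗[k] L →ₗ[k] A ⊗[k] L) : Prop :=
  ∀ (α β : A) (ξ η : L), br (α ⊗ₜ ξ) (β ⊗ₜ η)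
    = (α * β) ⊗ₜ ⁅ξ, η⁆ + (α * a ξ β) ⊗ₜ η - (β * a η α) ⊗ₜ ξ

variable {a : L →ₗ⁅k⁆ Derivation k A A} {br : A ⊗[k] L →ₗ[k] A ⊗[k] L →ₗ[k] A ⊗[k] L}

theorem IsTransformationBracket.one_tmul (hbr : IsTransformationBracket a br) (ξ η : L) :
    br (1 ⊗ₜ ξ) (1 ⊗ₜ η) = (1 : A) ⊗ₜ ⁅ξ, η⁆ := by
  simp [hbr 1 1 ξ η]

section

attribute [local instance 100] LieRing.ofAssociativeRing

def restrictRep (hbr : IsTransformationBracket a br) (ρ : A ⊗[k] L →ₗ[A] Module.End k M)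
    (hρ : ∀ x y, ρ (br x y) = ρ x * ρ y - ρ y * ρ x) : L →ₗ⁅k⁆ Module.End k M where
  __ := (ρ.restrictScalars k).comp (TensorProduct.mk k A L 1)
  map_lie' {ξ η} := by simp [← hbr.one_tmul, hρ, Ring.lie_def]

end

open LinearMap

variable [LieRingModule L M] [LieModule k L M] {ρ : A ⊗[k] L →ₗ[A] Module.End k M}

theorem liftBaseChange_apply_bracket (hbr : IsTransformationBracket a br)
    {anchor : A ⊗[k] L →ₗ[A] Derivation k A A} (hanchor : ∀ α ξ, anchor (α ⊗ₜ ξ) = α • a ξ)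
    (hρ_leibniz : ∀ x (f : A) (m : M), ρ x (f • m) = f • ρ x m + anchor x f • m)
    (hρ : ∀ ξ m, ρ (1 ⊗ₜ ξ) m = ⁅ξ, m⁆) (d : LieDerivation k L M) (x y : A ⊗[k] L) :
    (d : L →ₗ[k] M).liftBaseChange A (br x y)
      = ρ x ((d : L →ₗ[k] M).liftBaseChange A y) - ρ y ((d : L →ₗ[k] M).liftBaseChange A x) := by
  have hρ_tmul (α β : A) (ξ : L) (m : M) :
      ρ (α ⊗ₜ ξ) (β • m) = (α * β) • ⁅ξ, m⁆ + (α * a ξ β) • m := by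
    have hα : α ⊗ₜ[k] ξ = α • (1 : A) ⊗ₜ[k] ξ := by rw [smul_tmul', smul_eq_mul, mul_one]
    rw [hα, ρ.map_smul, LinearMap.smul_apply, hρ_leibniz, hρ, hanchor, one_smul, smul_add,
      smul_smul, smul_smul]
  induction x using TensorProduct.induction_on with
  | zero => simp
  | add x₁ x₂ h₁ h₂ => simp only [map_add, LinearMap.add_apply, h₁, h₂]; abel
  | tmul α ξ =>
    induction y using TensorProduct.induction_on with
    | zero => simp
    | add y₁ y₂ h₁ h₂ => simp only [map_add, LinearMap.add_apply, h₁, h₂]; abel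
    | tmul β η =>
      simp only [hbr α β ξ η, map_sub, map_add, liftBaseChange_tmul, LieDerivation.coeFn_coe,
        LieDerivation.apply_lie_eq_sub, hρ_tmul]
      module

def restrictDerivation (hbr : IsTransformationBracket a br) (hρ : ∀ ξ m, ρ (1 ⊗ₜ ξ) m = ⁅ξ, m⁆)
    (D : A ⊗[k] L →ₗ[A] M) (hD : ∀ x y, D (br x y) = ρ x (D y) - ρ y (D x)) :
    LieDerivation k L M where
  __ := (liftBaseChangeEquiv A).symm D
  leibniz' ξ η := by simp [← hbr.one_tmul, hD, hρ]

theorem liftBaseChange_restrictDerivation (hbr : IsTransformationBracket a br)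
    (hρ : ∀ ξ m, ρ (1 ⊗ₜ ξ) m = ⁅ξ, m⁆) (D : A ⊗[k] L →ₗ[A] M)
    (hD : ∀ x y, D (br x y) = ρ x (D y) - ρ y (D x)) :
    (restrictDerivation hbr hρ D hD : L →ₗ[k] M).liftBaseChange A = D :=
  (liftBaseChangeEquiv A).apply_symm_apply D

end LieRinehart

/-- **Derivations of the free Lie-Rinehart algebra are freely determined by their values on the
generators.** Let `L_{A,S} = A ⊗[k] FreeLie_k(S)` be the free `(k,A)`-Lie-Rinehart algebra
(with transformation bracket `brF` and anchor `anchF`), and let `(M, ρ)` be a representation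
of `L_{A,S}`. Then for every map `δ₀ : S → M` there exists a unique `A`-linear map
`D : L_{A,S} → M` with `D(1 ⊗ ι(s)) = δ₀(s)` for all `s ∈ S` and
`D([x,y]) = ρ(x)(D(y)) − ρ(y)(D(x))` for all `x, y`. -/
theorem free_lie_rinehart_derivations
    (k A S M : Type*) [Field k] [CommRing A] [Algebra k A]
    [AddCommGroup M] [Module k M] [Module A M] [IsScalarTower k A M] [SMulCommClass k A M]
    (aS : S → Derivation k A A)
    -- the bracket and anchor of the free Lie-Rinehart algebra L_{A,S}
    (brF : (A ⊗[k] FreeLieAlgebra k S) →ₗ[k] (A ⊗[k] FreeLieAlgebra k S) →ₗ[k]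
      (A ⊗[k] FreeLieAlgebra k S))
    (hbrF : ∀ (α β : A) (ξ η : FreeLieAlgebra k S),
      brF (α ⊗ₜ[k] ξ) (β ⊗ₜ[k] η)
        = (α * β) ⊗ₜ[k] ⁅ξ, η⁆
          + (α * (FreeLieAlgebra.lift k aS ξ) β) ⊗ₜ[k] η
          - (β * (FreeLieAlgebra.lift k aS η) α) ⊗ₜ[k] ξ)
    (anchF : (A ⊗[k] FreeLieAlgebra k S) →ₗ[A] Derivation k A A)
    (hanchF : ∀ (α : A) (ξ : FreeLieAlgebra k S),
      anchF (α ⊗ₜ[k] ξ) = α • (FreeLieAlgebra.lift k aS ξ))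
    -- the representation (M, ρ) of L_{A,S}
    (ρ : (A ⊗[k] FreeLieAlgebra k S) →ₗ[A] Module.End k M)
    (hρleib : ∀ (x : A ⊗[k] FreeLieAlgebra k S) (f : A) (m : M),
      ρ x (f • m) = f • ρ x m + (anchF x) f • m)
    (hρlie : ∀ x y : A ⊗[k] FreeLieAlgebra k S,
      ρ (brF x y) = ρ x * ρ y - ρ y * ρ x)
    -- the prescribed values on the generators
    (δ₀ : S → M) :
    ∃! D : (A ⊗[k] FreeLieAlgebra k S) →ₗ[A] M,
      (∀ s : S, D ((1 : A) ⊗ₜ[k] FreeLieAlgebra.of k s) = δ₀ s) ∧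
      (∀ x y : A ⊗[k] FreeLieAlgebra k S,
        D (brF x y) = ρ x (D y) - ρ y (D x)) := by
  have hbr : LieRinehart.IsTransformationBracket (FreeLieAlgebra.lift k aS) brF := hbrF
  let _ : LieRing (Module.End k M) := LieRing.ofAssociativeRing
  let π := LieRinehart.restrictRep hbr ρ hρlie
  let _ := LieRingModule.compLieHom M π
  have _ := LieModule.compLieHom M π
  have hρ (ξ : FreeLieAlgebra k S) (m : M) : ρ (1 ⊗ₜ ξ) m = ⁅ξ, m⁆ := rfl
  obtain ⟨d, hd_of, hd_unique⟩ := FreeLieAlgebra.existsUnique_lieDerivation k δ₀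
  refine ⟨(d : FreeLieAlgebra k S →ₗ[k] M).liftBaseChange A,
    ⟨fun s ↦ by simp [hd_of], LieRinehart.liftBaseChange_apply_bracket hbr hanchF hρleib hρ d⟩, ?_⟩
  rintro D ⟨hD_of, hD⟩
  rw [← LieRinehart.liftBaseChange_restrictDerivation hbr hρ D hD,
    hd_unique (LieRinehart.restrictDerivation hbr hρ D hD) hD_of]
end
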